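/- An octonionic hermitian 2×2 matrix A = [[a, q],[q̄, b]] with a, b real and q an octonion is positive definite (i.e., Re(ξ* A ξ) > 0 for every nonzero column ξ ∈ 𝕆²) if and only if a > 0 and det A := ab − |q|² > 0. -/

import Mathlib

noncomputable section

def Oct : Type := Quaternion ℝ × Quaternion ℝ

namespace Oct

def fst (p : Oct) : Quaternion ℝ := Prod.fst p
def snd (p : Oct) : Quaternion ℝ := Prod.snd p

instance : NormedAddCommGroup Oct :=
  inferInstanceAs (NormedAddCommGroup (Quaternion ℝ × Quaternion ℝ))
instance : NormedSpace ℝ Oct :=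
  inferInstanceAs (NormedSpace ℝ (Quaternion ℝ × Quaternion ℝ))
instance : MeasurableSpace Oct := borel Oct

instance : One Oct := ⟨((1 : Quaternion ℝ), (0 : Quaternion ℝ))⟩

/-- Cayley–Dickson multiplication on 𝕆 = ℍ × ℍ. -/
instance : Mul Oct := ⟨fun p q =>
  (fst p * fst q - star (snd q) * snd p, snd q * fst p + snd p * star (fst q))⟩

/-- Octonionic conjugation. -/
def conj (p : Oct) : Oct := (star (fst p), -(snd p))

/-- Real part of an octonion. -/
def re (p : Oct) : ℝ := (fst p).re

/-- |p|² = Re(p p̄). -/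
def normSq (p : Oct) : ℝ := re (p * conj p)

/-- Embedding of the reals into the octonions. -/
def ofReal (r : ℝ) : Oct := ((r : Quaternion ℝ), (0 : Quaternion ℝ))

end Oct

/-! Multiplying the form by `a` completes the square:
`a · Re(ξ* A ξ) = |a x + q y|² + det A · |y|²`.
Despite the non-associativity of 𝕆 this only needs the composition law `|q y| = |q| |y|` and the
independence of `Re (p q r)` of the bracketing. Sufficiency is then immediate; necessity follows
by testing `ξ = (1, 0)` and `ξ = (-q / a, 1)`. -/

namespace Oct

@[ext]
lemma ext {p q : Oct} (h₁ : p.1 = q.1) (h₂ : p.2 = q.2) : p = q := Prod.ext h₁ h₂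

@[simp] lemma fst_zero : (0 : Oct).1 = 0 := rfl
@[simp] lemma snd_zero : (0 : Oct).2 = 0 := rfl
@[simp] lemma fst_one : (1 : Oct).1 = 1 := rfl
@[simp] lemma snd_one : (1 : Oct).2 = 0 := rfl
@[simp] lemma fst_add (p q : Oct) : (p + q).1 = p.1 + q.1 := rfl
@[simp] lemma snd_add (p q : Oct) : (p + q).2 = p.2 + q.2 := rfl
@[simp] lemma fst_smul (r : ℝ) (p : Oct) : (r • p).1 = r • p.1 := rfl
@[simp] lemma snd_smul (r : ℝ) (p : Oct) : (r • p).2 = r • p.2 := rfl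
@[simp] lemma fst_mul (p q : Oct) : (p * q).1 = p.1 * q.1 - star q.2 * p.2 := rfl
@[simp] lemma snd_mul (p q : Oct) : (p * q).2 = q.2 * p.1 + p.2 * star q.1 := rfl
@[simp] lemma fst_conj (p : Oct) : (conj p).1 = star p.1 := rfl
@[simp] lemma snd_conj (p : Oct) : (conj p).2 = -p.2 := rfl

lemma re_def (p : Oct) : re p = p.1.re := rfl

protected lemma one_ne_zero : (1 : Oct) ≠ 0 := fun h =>
  one_ne_zero (congrArg Prod.fst h : (1 : Quaternion ℝ) = 0)

protected lemma zero_mul (p : Oct) : 0 * p = 0 := by ext <;> simp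

protected lemma mul_zero (p : Oct) : p * 0 = 0 := by ext <;> simp

protected lemma mul_one (p : Oct) : p * 1 = p := by ext <;> simp

protected lemma smul_mul (r : ℝ) (p q : Oct) : (r • p) * q = r • (p * q) := by
  ext <;> simp [smul_sub, smul_add]

lemma re_zero : re 0 = 0 := rfl

lemma re_smul (r : ℝ) (p : Oct) : re (r • p) = r * re p := by
  simp [re_def]

lemma normSq_eq (p : Oct) : normSq p = Quaternion.normSq p.1 + Quaternion.normSq p.2 := by
  simp only [normSq, re_def, fst_mul, snd_conj, fst_conj, star_neg, neg_mul, sub_neg_eq_add,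
    Quaternion.re_add, Quaternion.self_mul_star, Quaternion.star_mul_self, Quaternion.re_coe]

lemma normSq_nonneg (p : Oct) : 0 ≤ normSq p := by
  rw [normSq_eq]
  exact add_nonneg Quaternion.normSq_nonneg Quaternion.normSq_nonneg

lemma normSq_eq_zero {p : Oct} : normSq p = 0 ↔ p = 0 := by
  rw [normSq_eq, add_eq_zero_iff_of_nonneg Quaternion.normSq_nonneg Quaternion.normSq_nonneg,
    Quaternion.normSq_eq_zero, Quaternion.normSq_eq_zero, Oct.ext_iff, fst_zero, snd_zero]

lemma normSq_pos {p : Oct} (h : p ≠ 0) : 0 < normSq p :=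
  (normSq_nonneg p).lt_of_ne' (mt normSq_eq_zero.mp h)

lemma normSq_zero : normSq 0 = 0 := normSq_eq_zero.mpr rfl

lemma normSq_one : normSq 1 = 1 := by
  simp [normSq_eq]

lemma normSq_smul (r : ℝ) (p : Oct) : normSq (r • p) = r ^ 2 * normSq p := by
  simp only [normSq_eq, fst_smul, snd_smul, Quaternion.normSq_smul]
  ring

lemma normSq_add (p q : Oct) : normSq (p + q) = normSq p + normSq q + 2 * re (p * conj q) := by
  simp only [normSq_eq, fst_add, snd_add, Quaternion.normSq_add, re_def, fst_mul, fst_conj,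
    snd_conj, star_neg, neg_mul, sub_neg_eq_add, Quaternion.re_add, Quaternion.re_mul,
    Quaternion.re_star, Quaternion.imI_star, Quaternion.imJ_star, Quaternion.imK_star]
  ring

lemma normSq_mul (p q : Oct) : normSq (p * q) = normSq p * normSq q := by
  simp only [normSq_eq, fst_mul, snd_mul, Quaternion.normSq_def', Quaternion.re_mul,
    Quaternion.imI_mul, Quaternion.imJ_mul, Quaternion.imK_mul, Quaternion.re_add,
    Quaternion.imI_add, Quaternion.imJ_add, Quaternion.imK_add, Quaternion.re_sub,
    Quaternion.imI_sub, Quaternion.imJ_sub, Quaternion.imK_sub, Quaternion.re_star,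
    Quaternion.imI_star, Quaternion.imJ_star, Quaternion.imK_star]
  ring

lemma re_mul_conj_comm (p q : Oct) : re (p * conj q) = re (q * conj p) := by
  simp only [re_def, fst_mul, fst_conj, snd_conj, Quaternion.re_mul, Quaternion.re_sub,
    Quaternion.re_neg, Quaternion.imI_neg, Quaternion.imJ_neg, Quaternion.imK_neg,
    Quaternion.re_star, Quaternion.imI_star, Quaternion.imJ_star, Quaternion.imK_star]
  ring

lemma re_mul_assoc (p q r : Oct) : re (p * q * r) = re (p * (q * r)) := by
  simp only [re_def, fst_mul, snd_mul, Quaternion.re_mul, Quaternion.imI_mul, Quaternion.imJ_mul,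
    Quaternion.imK_mul, Quaternion.re_add, Quaternion.imI_add, Quaternion.imJ_add,
    Quaternion.imK_add, Quaternion.re_sub, Quaternion.imI_sub, Quaternion.imJ_sub,
    Quaternion.imK_sub, Quaternion.re_star, Quaternion.imI_star, Quaternion.imJ_star,
    Quaternion.imK_star]
  ring

/-- `hermForm a b q x y` is `Re(ξ* A ξ)` for `A = [[a, q], [q̄, b]]` and `ξ = (x, y)`. -/
def hermForm (a b : ℝ) (q x y : Oct) : ℝ :=
  a * normSq x + b * normSq y + 2 * re (q * (y * conj x))

lemma mul_hermForm (a b : ℝ) (q x y : Oct) :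
    a * hermForm a b q x y = normSq (a • x + q * y) + (a * b - normSq q) * normSq y := by
  rw [normSq_add, normSq_smul, normSq_mul, Oct.smul_mul, re_smul, re_mul_conj_comm,
    re_mul_assoc, hermForm]
  ring

lemma hermForm_zero_right (a b : ℝ) (q x : Oct) : hermForm a b q x 0 = a * normSq x := by
  rw [hermForm, normSq_zero, Oct.zero_mul, Oct.mul_zero, re_zero]
  ring

lemma hermForm_one_zero (a b : ℝ) (q : Oct) : hermForm a b q 1 0 = a := by
  rw [hermForm_zero_right, normSq_one, mul_one]

lemma mul_hermForm_neg_inv_smul {a : ℝ} (ha : a ≠ 0) (b : ℝ) (q : Oct) :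
    a * hermForm a b q (-a⁻¹ • q) 1 = a * b - normSq q := by
  rw [mul_hermForm, smul_smul, mul_neg, mul_inv_cancel₀ ha, neg_one_smul, Oct.mul_one,
    neg_add_cancel, normSq_zero, normSq_one, zero_add, mul_one]

lemma hermForm_pos {a b : ℝ} {q : Oct} (ha : 0 < a) (hdet : 0 < a * b - normSq q) {x y : Oct}
    (hxy : (x, y) ≠ 0) : 0 < hermForm a b q x y := by
  by_cases hy : y = 0
  · subst hy
    have hx : x ≠ 0 := fun hx => hxy (by rw [hx]; rfl)
    rw [hermForm_zero_right]
    exact mul_pos ha (normSq_pos hx)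
  · have h : 0 < a * hermForm a b q x y := by
      rw [mul_hermForm]
      exact add_pos_of_nonneg_of_pos (normSq_nonneg _) (mul_pos hdet (normSq_pos hy))
    exact pos_of_mul_pos_right h ha.le

end Oct

/-- Sylvester criterion: A = [[a,q],[q̄,b]] is positive definite iff a > 0 and det A > 0. -/
theorem sylvester_criterion (a b : ℝ) (q : Oct) :
    (∀ ξ : Oct × Oct, ξ ≠ 0 →
        0 < a * Oct.normSq ξ.1 + b * Oct.normSq ξ.2 +
            2 * Oct.re (q * (ξ.2 * Oct.conj ξ.1))) ↔
      (0 < a ∧ 0 < a * b - Oct.normSq q) := by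
  change (∀ ξ : Oct × Oct, ξ ≠ 0 → 0 < Oct.hermForm a b q ξ.1 ξ.2) ↔ _
  constructor
  · intro h
    have ha : 0 < a := Oct.hermForm_one_zero a b q ▸ h (1, 0) (by simp [Oct.one_ne_zero])
    refine ⟨ha, ?_⟩
    rw [← Oct.mul_hermForm_neg_inv_smul ha.ne' b q]
    exact mul_pos ha (h (-a⁻¹ • q, 1) (by simp [Oct.one_ne_zero]))
  · rintro ⟨ha, hdet⟩ ξ hξ
    exact Oct.hermForm_pos ha hdet hξ
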